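/- arXiv:1801.00474 — 4 statements merged into one kernel-verified Lean document; each statement's English description precedes it below -/
import Mathlib

section
/- (Maclaurin-type inequality) For positive integers r ≤ n and positive reals x_1,...,x_n, the elementary symmetric sum of degree r satisfies e_r(x_1,...,x_n) ≤ C(n,r)·((x_1+⋯+x_n)/n)^r. -/
/-!
Write `e_k⁽ⁱ⁾` for the elementary symmetric sum of the variables other than `x i`. Double
counting gives `∑ i, e_k⁽ⁱ⁾ = (n - k) e_k`, and together with `e_{k+1} = e_{k+1}⁽ⁱ⁾ + x i e_k⁽ⁱ⁾`
also `∑ i, x i e_k⁽ⁱ⁾ = (k + 1) e_{k+1}`. For nonnegative variables `x i` and `e_k⁽ⁱ⁾` are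
oppositely ordered, so Chebyshev's sum inequality yields `n (k + 1) e_{k+1} ≤ (n - k) (∑ x) e_k`,
i.e. `E_{k+1} ≤ E_1 E_k` for the normalised sums `E_k = e_k / C(n, k)`; induction on `k` gives
`E_k ≤ E_1 ^ k`.
-/

open Finset

namespace Finset

variable {ι R : Type*}

def esymm [CommSemiring R] (t : Finset ι) (x : ι → R) (k : ℕ) : R :=
  ∑ s ∈ t.powersetCard k, ∏ i ∈ s, x i

section CommSemiring

variable [CommSemiring R] (t : Finset ι) (x : ι → R)

@[simp]
lemma esymm_zero : t.esymm x 0 = 1 := by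
  simp [esymm]

lemma esymm_eq_zero_of_card_lt {k : ℕ} (hk : #t < k) : t.esymm x k = 0 := by
  simp [esymm, powersetCard_eq_empty.mpr hk]

variable [DecidableEq ι]

lemma esymm_insert_succ {a : ι} (ha : a ∉ t) (k : ℕ) :
    (insert a t).esymm x (k + 1) = t.esymm x (k + 1) + x a * t.esymm x k := by
  have hinj : Set.InjOn (insert a) (t.powersetCard k : Set (Finset ι)) := fun s hs s' hs' h => by
    simp only [mem_coe, mem_powersetCard] at hs hs'
    rw [← erase_insert (fun h => ha (hs.1 h)), h, erase_insert (fun h => ha (hs'.1 h))]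
  rw [esymm, powersetCard_succ_insert ha, sum_union, sum_image hinj, esymm, esymm, mul_sum]
  · refine congrArg _ (sum_congr rfl fun s hs => prod_insert fun h => ha ?_)
    exact (mem_powersetCard.mp hs).1 h
  · refine disjoint_right.mpr fun s hs hs' => ?_
    obtain ⟨u, -, rfl⟩ := mem_image.mp hs
    exact ha ((mem_powersetCard.mp hs').1 (mem_insert_self a u))

lemma esymm_succ_eq_erase {i : ι} (hi : i ∈ t) (k : ℕ) :
    t.esymm x (k + 1) = (t.erase i).esymm x (k + 1) + x i * (t.erase i).esymm x k := by
  conv_lhs => rw [← insert_erase hi]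
  exact esymm_insert_succ _ x (notMem_erase i t) k

lemma sum_esymm_erase (k : ℕ) :
    ∑ i ∈ t, (t.erase i).esymm x k = (#t - k : ℕ) * t.esymm x k := by
  have hcomm : ∀ i s, i ∈ t ∧ s ∈ (t.erase i).powersetCard k ↔
      i ∈ t \ s ∧ s ∈ t.powersetCard k := fun i s => by
    simp only [mem_powersetCard, mem_sdiff, subset_erase]
    tauto
  simp only [esymm, mul_sum]
  rw [sum_comm' hcomm]
  refine sum_congr rfl fun s hs => ?_
  obtain ⟨hst, hcard⟩ := mem_powersetCard.mp hs
  rw [sum_const, card_sdiff_of_subset hst, hcard, nsmul_eq_mul]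

end CommSemiring

lemma sum_mul_esymm_erase [CommRing R] [DecidableEq ι] (t : Finset ι) (x : ι → R) (k : ℕ) :
    ∑ i ∈ t, x i * (t.erase i).esymm x k = (k + 1) * t.esymm x (k + 1) := by
  rcases lt_or_ge k #t with hk | hk
  · have hsplit : ∑ i ∈ t, x i * (t.erase i).esymm x k
        = #t * t.esymm x (k + 1) - ∑ i ∈ t, (t.erase i).esymm x (k + 1) := by
      rw [eq_sub_iff_add_eq, ← sum_add_distrib, ← nsmul_eq_mul, ← sum_const]
      exact sum_congr rfl fun i hi => by rw [esymm_succ_eq_erase t x hi]; ring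
    rw [hsplit, sum_esymm_erase, Nat.cast_sub hk]
    push_cast
    ring
  · rw [esymm_eq_zero_of_card_lt t x (Nat.lt_succ_of_le hk), mul_zero]
    refine sum_eq_zero fun i hi => ?_
    rw [esymm_eq_zero_of_card_lt _ x ((card_erase_lt_of_mem hi).trans_le hk), mul_zero]

section Order

variable [CommRing R] [LinearOrder R] [IsStrictOrderedRing R] (t : Finset ι) {x : ι → R}

lemma esymm_nonneg (hx : ∀ i ∈ t, 0 ≤ x i) (k : ℕ) : 0 ≤ t.esymm x k :=
  sum_nonneg fun _ hs => prod_nonneg fun i hi => hx i ((mem_powersetCard.mp hs).1 hi)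

variable [DecidableEq ι]

lemma antivaryOn_esymm_erase (hx : ∀ i ∈ t, 0 ≤ x i) (k : ℕ) :
    AntivaryOn x (fun i => (t.erase i).esymm x k) t := by
  intro i hi j hj
  contrapose!
  intro hij
  cases k with
  | zero => simp
  | succ m =>
    have hne : i ≠ j := by rintro rfl; exact hij.false
    have hj' : j ∈ t.erase i := mem_erase.mpr ⟨hne.symm, hj⟩
    have hi' : i ∈ t.erase j := mem_erase.mpr ⟨hne, hi⟩
    have hB : 0 ≤ ((t.erase i).erase j).esymm x m :=
      esymm_nonneg _ (fun l hl => hx l (mem_of_mem_erase (mem_of_mem_erase hl))) m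
    -- `e_{m+1}(t \ i) - e_{m+1}(t \ j) = (x j - x i) e_m(t \ {i, j})`
    rw [esymm_succ_eq_erase _ x hj', esymm_succ_eq_erase _ x hi', erase_right_comm]
    nlinarith

lemma card_mul_esymm_succ_le (hx : ∀ i ∈ t, 0 ≤ x i) (k : ℕ) :
    #t * ((k + 1) * t.esymm x (k + 1)) ≤ (∑ i ∈ t, x i) * ((#t - k : ℕ) * t.esymm x k) := by
  rw [← sum_mul_esymm_erase, ← sum_esymm_erase]
  exact (antivaryOn_esymm_erase t hx k).card_mul_sum_le_sum_mul_sum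

end Order

theorem esymm_le_choose_mul_pow [Field R] [LinearOrder R] [IsStrictOrderedRing R] [DecidableEq ι]
    (t : Finset ι) {x : ι → R} (hx : ∀ i ∈ t, 0 ≤ x i) (k : ℕ) :
    t.esymm x k ≤ (#t).choose k * ((∑ i ∈ t, x i) / #t) ^ k := by
  induction k with
  | zero => simp
  | succ k ih =>
    rcases (#t).eq_zero_or_pos with hempty | hpos
    · rw [esymm_eq_zero_of_card_lt t x (by omega), hempty, Nat.choose_zero_succ]
      simp
    set n := #t
    set S := ∑ i ∈ t, x i
    have hS : 0 ≤ S := sum_nonneg hx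
    have hchoose : (n.choose (k + 1) : R) * (k + 1) = n.choose k * (n - k : ℕ) := by
      exact_mod_cast Nat.choose_succ_right_eq n k
    refine le_of_mul_le_mul_left ?_ (by positivity : (0 : R) < n * (k + 1))
    calc (n * (k + 1) : R) * t.esymm x (k + 1)
        ≤ S * ((n - k : ℕ) * t.esymm x k) := by
          simpa only [mul_assoc] using card_mul_esymm_succ_le t hx k
      _ ≤ S * ((n - k : ℕ) * (n.choose k * (S / n) ^ k)) := by gcongr
      _ = n * (k + 1) * (n.choose (k + 1) * (S / n) ^ (k + 1)) := by
          have hcancel : (n : R) * (S / n) = S := mul_div_cancel₀ S (by positivity)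
          rw [pow_succ]
          linear_combination (-(S / n) ^ k * S) * hchoose
            - (k + 1) * n.choose (k + 1) * (S / n) ^ k * hcancel

end Finset

theorem stmt3_general (n r : ℕ) (x : Fin n → ℝ)
    (hx : ∀ i, 0 < x i) :
    ∑ s ∈ Finset.univ.powersetCard r, ∏ i ∈ s, x i
      ≤ (n.choose r : ℝ) * ((∑ i, x i) / n) ^ r := by
  have h := univ.esymm_le_choose_mul_pow (fun i _ => (hx i).le) r
  rwa [card_univ, Fintype.card_fin] at h

theorem stmt3 (n r : ℕ) (hr : 0 < r) (hrn : r ≤ n) (x : Fin n → ℝ)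
    (hx : ∀ i, 0 < x i) :
    ∑ s ∈ Finset.univ.powersetCard r, ∏ i ∈ s, x i
      ≤ (n.choose r : ℝ) * ((∑ i, x i) / n) ^ r :=
  stmt3_general n r x hx
end

section
/- Stars are anti-common: for every m ≥ 2 and every r ≥ m−1, lim_{n→∞} rbC_r(K_{1,m−1};n) = (C(r,m−1)·(m−1)!)/r^{m−1}. -/
open Filter Topology

/-- A copy of `H` (given by an injection `f`) in `K_n` is rainbow under the
edge-coloring `c` if all edges of the copy receive distinct colors. -/
def IsRainbow {m n r : ℕ} (H : SimpleGraph (Fin m)) (c : Sym2 (Fin n) → Fin r)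
    (f : Fin m ↪ Fin n) : Prop :=
  ∀ e₁ ∈ H.edgeSet, ∀ e₂ ∈ H.edgeSet, e₁ ≠ e₂ → c (e₁.map ⇑f) ≠ c (e₂.map ⇑f)

/-- Number of (labeled) rainbow copies of `H` in `K_n` under the coloring `c`. -/
noncomputable def rainbowCount {m n r : ℕ} (H : SimpleGraph (Fin m))
    (c : Sym2 (Fin n) → Fin r) : ℕ :=
  Nat.card {f : Fin m ↪ Fin n // IsRainbow H c f}

/-- `rbL H n r`: the maximum number of labeled rainbow copies of `H` over all
`r`-edge-colorings of `K_n`.  (The labeled count is `|Aut H|` times the number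
of rainbow copies `rb_r(H;n)` of the paper.) -/
noncomputable def rbL {m : ℕ} (H : SimpleGraph (Fin m)) (n r : ℕ) : ℕ :=
  sSup (Set.range fun c : Sym2 (Fin n) → Fin r => rainbowCount H c)

/-- The number of automorphisms of `H`. -/
noncomputable def autCard {m : ℕ} (H : SimpleGraph (Fin m)) : ℕ :=
  Nat.card (H ≃g H)

/-- `rbC H n r`: the maximum proportion of copies of `H` in `K_n` which are rainbow,
i.e. `rb_r(H;n) / (C(n,m)·m!/|Aut(H)|) = rbL H n r / (C(n,m)·m!)`. -/
noncomputable def rbC {m : ℕ} (H : SimpleGraph (Fin m)) (n r : ℕ) : ℝ :=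
  (rbL H n r : ℝ) / ((n.choose m) * (m.factorial))

/-- The star `K_{1,m-1}` on `m` vertices, with center the vertex `0`. -/
def starG (m : ℕ) : SimpleGraph (Fin m) where
  Adj a b := (a.val = 0 ∨ b.val = 0) ∧ a ≠ b
  symm := by
    constructor
    intro a b h
    exact ⟨h.1.symm, h.2.symm⟩
  loopless := by
    constructor
    intro a h
    exact h.2 rfl

/-!
A rainbow star is a centre `v` together with leaves `u₁, …, u_{m-1}` such that the edges `v uᵢ`
have distinct colours. Writing `d_v(j)` for the number of neighbours joined to `v` in colour `j`,
the labelled rainbow stars at `v` number `(m-1)! · e_{m-1}(d_v)`, where `e_{m-1}` is the elementary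
symmetric polynomial. Since `∑ⱼ d_v(j) = n - 1`, Maclaurin's inequality bounds this by
`(m-1)! · C(r, m-1) · ((n - 1) / r)^{m-1}`. The colouring `{u, w} ↦ (u + w) mod r` gives every
`d_v(j)` at least `n / r - 1`, so the bound is attained asymptotically, and dividing by the
`n (n-1) ⋯ (n-m+1)` labelled copies of the star gives the limit.
-/

open Finset Function

theorem pow_succ_tangent_le {u m : ℝ} (hu : 0 ≤ u) (hm : 0 ≤ m) (k : ℕ) :
    u ^ (k + 1) + (k + 1) * u ^ k * (m - u) ≤ m ^ (k + 1) := by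
  rcases hu.eq_or_lt with rfl | hu
  · rcases k with _ | k <;> simp [hm]
  · have h := one_add_mul_sub_le_pow (by linarith [div_nonneg hm hu.le] : -1 ≤ m / u) (k + 1)
    rw [div_pow, le_div_iff₀ (by positivity)] at h
    push_cast at h
    calc u ^ (k + 1) + (k + 1) * u ^ k * (m - u)
        = (1 + (k + 1) * (m / u - 1)) * u ^ (k + 1) := by field_simp; ring
      _ ≤ m ^ (k + 1) := h

/-- The inductive step of Maclaurin's inequality: `u` is the mean of `b` values and `a` is added. -/
theorem choose_mul_pow_add_le {b k : ℕ} {u a : ℝ} (hu : 0 ≤ u) (ha : 0 ≤ a) :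
    b.choose (k + 1) * u ^ (k + 1) + a * (b.choose k * u ^ k) ≤
      (b + 1).choose (k + 1) * ((b * u + a) / (b + 1)) ^ (k + 1) := by
  obtain ⟨m, hm⟩ : ∃ m : ℝ, m = (b * u + a) / (b + 1) := ⟨_, rfl⟩
  have ha' : a = (b + 1) * m - b * u := by rw [hm]; field_simp; ring
  have hpascal : ((b + 1).choose (k + 1) : ℝ) = b.choose k + b.choose (k + 1) := by
    exact_mod_cast Nat.choose_succ_succ b k
  have habsorb : ((b : ℝ) + 1) * b.choose k = (b + 1).choose (k + 1) * (k + 1) := by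
    exact_mod_cast Nat.add_one_mul_choose_eq b k
  rw [← hm]
  calc b.choose (k + 1) * u ^ (k + 1) + a * (b.choose k * u ^ k)
      = (b + 1).choose (k + 1) * (u ^ (k + 1) + (k + 1) * u ^ k * (m - u)) := by
        rw [ha']; linear_combination (u ^ k * (m - u)) * habsorb - u ^ (k + 1) * hpascal
    _ ≤ (b + 1).choose (k + 1) * m ^ (k + 1) :=
        mul_le_mul_of_nonneg_left (pow_succ_tangent_le hu (by rw [hm]; positivity) k)
          (by positivity)

theorem Multiset.esymm_cons_succ {R : Type*} [CommSemiring R] (a : R) (s : Multiset R) (k : ℕ) :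
    (a ::ₘ s).esymm (k + 1) = s.esymm (k + 1) + a * s.esymm k := by
  simp [Multiset.esymm, Multiset.powersetCard_cons, Multiset.sum_map_mul_left]

/-- Maclaurin's inequality, in the weak form `e_k ≤ C(n, k) (e_1 / n) ^ k`. -/
theorem Multiset.esymm_le_choose_mul_pow {s : Multiset ℝ} (hs : ∀ x ∈ s, 0 ≤ x) (k : ℕ) :
    s.esymm k ≤ s.card.choose k * (s.sum / s.card) ^ k := by
  induction s using Multiset.induction_on generalizing k with
  | empty => cases k <;> simp [Multiset.esymm, Multiset.powersetCard_zero_right]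
  | cons a s ih =>
    cases k with
    | zero => simp [Multiset.esymm]
    | succ k =>
      have ha : 0 ≤ a := hs a (Multiset.mem_cons_self a s)
      have hs' : ∀ x ∈ s, 0 ≤ x := fun x hx => hs x (Multiset.mem_cons_of_mem hx)
      have hsum : (s.card : ℝ) * (s.sum / s.card) = s.sum := by
        rcases eq_or_ne s 0 with rfl | hne
        · simp
        · exact mul_div_cancel₀ _ (by simpa using hne)
      calc (a ::ₘ s).esymm (k + 1) = s.esymm (k + 1) + a * s.esymm k := esymm_cons_succ a s k
        _ ≤ s.card.choose (k + 1) * (s.sum / s.card) ^ (k + 1) +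
              a * (s.card.choose k * (s.sum / s.card) ^ k) :=
          add_le_add (ih hs' _) (mul_le_mul_of_nonneg_left (ih hs' k) ha)
        _ ≤ (s.card + 1).choose (k + 1) *
              ((s.card * (s.sum / s.card) + a) / (s.card + 1)) ^ (k + 1) :=
          choose_mul_pow_add_le (div_nonneg (Multiset.sum_nonneg hs') (by positivity)) ha
        _ = _ := by rw [hsum]; simp [add_comm]

open Polynomial in
theorem tendsto_mul_sub_pow_div_descFactorial (a : ℝ) (k : ℕ) :
    Tendsto (fun n : ℕ => n * (n - a) ^ k / n.descFactorial (k + 1)) atTop (𝓝 1) := by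
  have hP : (X * (X - C a) ^ k).Monic := monic_X.mul ((monic_X_sub_C a).pow k)
  have hQ : (descPochhammer ℝ (k + 1)).Monic := monic_descPochhammer ℝ (k + 1)
  have hdeg : (X * (X - C a) ^ k).degree = (descPochhammer ℝ (k + 1)).degree := by
    rw [degree_eq_natDegree hP.ne_zero, degree_eq_natDegree hQ.ne_zero, monic_X.natDegree_mul
      ((monic_X_sub_C a).pow k), natDegree_X, natDegree_pow, natDegree_X_sub_C,
      descPochhammer_natDegree, add_comm, mul_one]
  have h := (div_tendsto_atTop_leadingCoeff_div_of_degree_eq _ _ hdeg).comp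
    tendsto_natCast_atTop_atTop
  rw [hP.leadingCoeff, hQ.leadingCoeff, div_one] at h
  simpa only [Function.comp_def, eval_mul, eval_X, eval_pow, eval_sub, eval_C,
    descPochhammer_eval_eq_descFactorial] using h

section ColorClasses

variable {ι α β : Type*} [Fintype ι] [Finite α] [Fintype β]

theorem card_injective_comp_eq_sum (χ : α → β) :
    Nat.card {g : ι → α // Injective (χ ∘ g)} =
      ∑ h : ι ↪ β, ∏ i, Nat.card {a // χ a = h i} := by
  let e : {g : ι → α // Injective (χ ∘ g)} ≃ Σ h : ι ↪ β, {g : ι → α // ∀ i, χ (g i) = h i} :=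
    { toFun := fun g => ⟨⟨χ ∘ g, g.2⟩, g.1, fun _ => rfl⟩
      invFun := fun p => ⟨p.2.1, by convert p.1.injective using 1; exact funext p.2.2⟩
      left_inv := fun _ => rfl
      right_inv := by
        rintro ⟨⟨f, hf⟩, g, hg⟩
        obtain rfl : χ ∘ g = f := funext hg
        rfl }
  rw [Nat.card_congr e, Nat.card_sigma]
  exact sum_congr rfl fun h _ => by
    rw [Nat.card_congr (Equiv.subtypePiEquivPi (p := fun i a => χ a = h i)), Nat.card_pi]

theorem sum_embedding_prod_le {x : β → ℝ} (hx : ∀ b, 0 ≤ x b) :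
    ∑ h : ι ↪ β, ∏ i, x (h i) ≤
      (Nat.card ι).factorial * ∑ t ∈ univ.powersetCard (Nat.card ι), ∏ b ∈ t, x b := by
  classical
  rw [Nat.card_eq_fintype_card]
  have hmaps : ∀ h ∈ (univ : Finset (ι ↪ β)), univ.map h ∈ univ.powersetCard (Fintype.card ι) :=
    fun h _ => mem_powersetCard.2 ⟨subset_univ _, by simp⟩
  rw [← sum_fiberwise_of_maps_to hmaps, mul_sum]
  refine sum_le_sum fun t ht => ?_
  have hprod : ∀ h ∈ ({h | univ.map h = t} : Finset (ι ↪ β)), ∏ i, x (h i) = ∏ b ∈ t, x b := by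
    intro h hh
    rw [← (mem_filter.1 hh).2, prod_map]
  rw [sum_congr rfl hprod, sum_const, nsmul_eq_mul]
  refine mul_le_mul_of_nonneg_right ?_ (prod_nonneg fun b _ => hx b)
  have hcard : #{h : ι ↪ β | univ.map h = t} ≤ Fintype.card (ι ↪ t) := by
    rw [← Fintype.card_subtype]
    refine Fintype.card_le_of_injective
      (fun h => ⟨fun i => ⟨h.1 i, subset_of_eq h.2 (mem_map_of_mem _ (mem_univ i))⟩,
        fun i j hij => h.1.injective (congrArg Subtype.val hij)⟩) ?_
    intro h₁ h₂ h
    exact Subtype.ext (DFunLike.ext _ _ fun i => congrArg Subtype.val (DFunLike.congr_fun h i))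
  rw [Fintype.card_embedding_eq, Fintype.card_coe, (mem_powersetCard.1 ht).2,
    Nat.descFactorial_self] at hcard
  exact_mod_cast hcard

theorem card_injective_comp_le (χ : α → β) :
    (Nat.card {g : ι → α // Injective (χ ∘ g)} : ℝ) ≤
      (Nat.card β).descFactorial (Nat.card ι) * (Nat.card α / Nat.card β) ^ Nat.card ι := by
  set d : β → ℝ := fun b => Nat.card {a // χ a = b}
  have hd : ∀ b, 0 ≤ d b := fun b => Nat.cast_nonneg _
  have hsum : (univ.val.map d).sum = Nat.card α := by
    simp only [d, ← Finset.sum_eq_multiset_sum]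
    exact_mod_cast (Nat.card_sigma.symm.trans (Nat.card_congr (Equiv.sigmaFiberEquiv χ)))
  rw [card_injective_comp_eq_sum, Nat.descFactorial_eq_factorial_mul_choose]
  push_cast
  calc ∑ h : ι ↪ β, ∏ i, d (h i)
      ≤ (Nat.card ι).factorial * (univ.val.map d).esymm (Nat.card ι) := by
        rw [Finset.esymm_map_val]; exact sum_embedding_prod_le hd
    _ ≤ (Nat.card ι).factorial * ((Nat.card β).choose (Nat.card ι) *
          (Nat.card α / Nat.card β) ^ Nat.card ι) := by
        have hmac := Multiset.esymm_le_choose_mul_pow (s := univ.val.map d)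
          (by simpa using fun b => hd b) (Nat.card ι)
        rw [hsum, Multiset.card_map, Finset.card_val, card_univ,
          ← Nat.card_eq_fintype_card (α := β)] at hmac
        exact mul_le_mul_of_nonneg_left hmac (by positivity)
    _ = _ := by ring

theorem le_card_injective_comp (χ : α → β) {m : ℕ} (hm : ∀ b, m ≤ Nat.card {a // χ a = b}) :
    (Nat.card β).descFactorial (Nat.card ι) * m ^ Nat.card ι ≤
      Nat.card {g : ι → α // Injective (χ ∘ g)} := by
  rw [card_injective_comp_eq_sum]
  calc (Nat.card β).descFactorial (Nat.card ι) * m ^ Nat.card ι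
      = ∑ _h : ι ↪ β, m ^ Fintype.card ι := by
        simp [Fintype.card_embedding_eq, Nat.card_eq_fintype_card]
    _ ≤ _ := sum_le_sum fun h _ => by
        simpa using pow_card_le_prod univ _ m fun i _ => hm (h i)

end ColorClasses
theorem starG_edgeSet (k : ℕ) :
    (starG (k + 2)).edgeSet = Set.range fun i : Fin (k + 1) => s(0, i.succ) := by
  ext e
  induction e using Sym2.ind with
  | _ a b =>
    simp only [SimpleGraph.mem_edgeSet, starG, Set.mem_range, Sym2.eq_iff]
    constructor
    · rintro ⟨hab | hab, hne⟩
      · obtain rfl : a = 0 := Fin.ext hab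
        exact ⟨b.pred (Ne.symm hne), Or.inl ⟨rfl, Fin.succ_pred _ _⟩⟩
      · obtain rfl : b = 0 := Fin.ext hab
        exact ⟨a.pred hne, Or.inr ⟨rfl, Fin.succ_pred _ _⟩⟩
    · rintro ⟨i, ⟨rfl, rfl⟩ | ⟨rfl, rfl⟩⟩
      · exact ⟨Or.inl rfl, (Fin.succ_ne_zero i).symm⟩
      · exact ⟨Or.inr rfl, Fin.succ_ne_zero i⟩

theorem isRainbow_starG_iff {k n r : ℕ} (c : Sym2 (Fin n) → Fin r) (f : Fin (k + 2) ↪ Fin n) :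
    IsRainbow (starG (k + 2)) c f ↔ Injective fun i : Fin (k + 1) => c s(f 0, f i.succ) := by
  have hinj : Injective fun i : Fin (k + 1) => s((0 : Fin (k + 2)), i.succ) := fun i j h => by
    simpa [Sym2.eq_iff, Fin.succ_ne_zero] using h
  simp only [IsRainbow, starG_edgeSet, Set.forall_mem_range, hinj.ne_iff, Sym2.map_mk,
    injective_iff_pairwise_ne, Pairwise, onFun]

theorem rainbowCount_starG {k n r : ℕ} (c : Sym2 (Fin n) → Fin r) :
    rainbowCount (starG (k + 2)) c =
      ∑ v : Fin n,
        Nat.card {g : Fin (k + 1) → {u // u ≠ v} // Injective fun i => c s(v, g i)} := by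
  let e : {f : Fin (k + 2) ↪ Fin n // IsRainbow (starG (k + 2)) c f} ≃
      Σ v : Fin n, {g : Fin (k + 1) → {u // u ≠ v} // Injective fun i => c s(v, g i)} :=
    { toFun := fun f => ⟨f.1 0, fun i => ⟨f.1 i.succ, f.1.injective.ne (Fin.succ_ne_zero i)⟩,
        (isRainbow_starG_iff c f.1).1 f.2⟩
      invFun := fun p => ⟨⟨Fin.cons p.1 fun i => (p.2.1 i).1,
          Fin.cons_injective_iff.2 ⟨fun ⟨i, hi⟩ => (p.2.1 i).2 hi,
            fun i j hij =>
              p.2.2 (congrArg (fun u : {u // u ≠ p.1} => c s(p.1, u)) (Subtype.ext hij))⟩⟩,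
        (isRainbow_starG_iff c _).2 p.2.2⟩
      left_inv := fun f => Subtype.ext (DFunLike.ext _ _ (Fin.cases rfl fun _ => rfl))
      right_inv := fun _ => rfl }
  rw [rainbowCount, Nat.card_congr e, Nat.card_sigma]

def sumModColoring (n r : ℕ) [NeZero r] : Sym2 (Fin n) → Fin r :=
  Sym2.lift ⟨fun u w => Fin.ofNat r (u + w), fun u w => by simp only [Nat.add_comm]⟩

theorem div_le_count_add_mod_eq {r : ℕ} [NeZero r] (v n : ℕ) (j : Fin r) :
    n / r ≤ Nat.count (fun x => (v + x) % r = j) n := by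
  have hmod : ∀ x, (v + x) % r = j ↔ x ≡ ((j - v : ZMod r)).val [MOD r] := by
    intro x
    rw [← ZMod.natCast_eq_natCast_iff, ZMod.natCast_zmod_val, eq_sub_iff_add_eq', ← Nat.cast_add,
      ZMod.natCast_eq_natCast_iff', Nat.mod_eq_of_lt j.isLt]
  simp_rw [hmod, Nat.count_modEq_card n (Nat.pos_of_neZero r)]
  exact Nat.le_add_right _ _

theorem le_card_fiber_sumModColoring {n r : ℕ} [NeZero r] (v : Fin n) (j : Fin r) :
    n / r - 1 ≤ Nat.card {u : {u // u ≠ v} // sumModColoring n r s(v, u) = j} := by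
  classical
  have hcolor : ∀ u : Fin n, sumModColoring n r s(v, u) = j ↔ (v + u : ℕ) % r = j := fun u => by
    simp [sumModColoring, Fin.ext_iff]
  have hcount : Nat.count (fun x => (v + x) % r = j) n = #{u : Fin n | (v + u : ℕ) % r = j} := by
    rw [Nat.count_eq_card_filter_range, ← card_map Fin.valEmbedding]
    congr 1
    ext x
    simp [Fin.exists_iff, and_comm]
  have herase : ({u : Fin n | (v + u : ℕ) % r = j} : Finset _).erase v =
      ({u : Fin n | u ≠ v ∧ sumModColoring n r s(v, u) = j} : Finset _) := by
    ext u; simp [hcolor]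
  rw [Nat.card_congr (Equiv.subtypeSubtypeEquivSubtypeInter (· ≠ v)
      (fun u => sumModColoring n r s(v, u) = j)), Nat.card_eq_fintype_card,
    Fintype.card_subtype, ← herase]
  exact (Nat.sub_le_sub_right ((div_le_count_add_mod_eq v n j).trans hcount.le) 1).trans
    pred_card_le_card_erase

theorem rainbowCount_starG_le {k n r : ℕ} (c : Sym2 (Fin n) → Fin r) :
    (rainbowCount (starG (k + 2)) c : ℝ) ≤
      n * r.descFactorial (k + 1) * ((n - 1) / r) ^ (k + 1) := by
  rw [rainbowCount_starG]
  push_cast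
  calc ∑ v : Fin n, (Nat.card {g : Fin (k + 1) → {u // u ≠ v} //
          Injective fun i => c s(v, g i)} : ℝ)
      ≤ ∑ _v : Fin n, r.descFactorial (k + 1) * ((n - 1) / r : ℝ) ^ (k + 1) := by
        refine sum_le_sum fun v _ => ?_
        refine (card_injective_comp_le (ι := Fin (k + 1))
          fun u : {u // u ≠ v} => c s(v, u)).trans_eq ?_
        simp only [Nat.card_eq_fintype_card, Fintype.card_fin, ne_eq, Fintype.card_subtype_compl,
          Fintype.card_unique, Nat.cast_sub (Fin.pos v), Nat.cast_one]
    _ = _ := by simp only [sum_const, card_univ, Fintype.card_fin, nsmul_eq_mul]; ring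

theorem le_rainbowCount_starG_sumModColoring (k n r : ℕ) [NeZero r] :
    n * r.descFactorial (k + 1) * (n / r - 1) ^ (k + 1) ≤
      rainbowCount (starG (k + 2)) (sumModColoring n r) := by
  rw [rainbowCount_starG]
  calc n * r.descFactorial (k + 1) * (n / r - 1) ^ (k + 1)
      = ∑ _v : Fin n, r.descFactorial (k + 1) * (n / r - 1) ^ (k + 1) := by
        simp only [mul_assoc, sum_const, card_univ, Fintype.card_fin, smul_eq_mul]
    _ ≤ _ := sum_le_sum fun v _ => by
        refine le_of_eq_of_le ?_ (le_card_injective_comp (ι := Fin (k + 1)) _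
          (le_card_fiber_sumModColoring v))
        simp only [Nat.card_eq_fintype_card, Fintype.card_fin]

theorem rainbowCount_le_rbL {m n r : ℕ} (H : SimpleGraph (Fin m)) (c : Sym2 (Fin n) → Fin r) :
    rainbowCount H c ≤ rbL H n r :=
  le_csSup (Set.finite_range _).bddAbove ⟨c, rfl⟩

theorem exists_rainbowCount_eq_rbL {m r : ℕ} [NeZero r] (H : SimpleGraph (Fin m)) (n : ℕ) :
    ∃ c : Sym2 (Fin n) → Fin r, rainbowCount H c = rbL H n r :=
  Nat.sSup_mem (Set.range_nonempty _) (Set.finite_range _).bddAbove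

theorem rbC_eq_div_descFactorial {m : ℕ} (H : SimpleGraph (Fin m)) (n r : ℕ) :
    rbC H n r = rbL H n r / n.descFactorial m := by
  rw [rbC, Nat.descFactorial_eq_factorial_mul_choose, Nat.cast_mul, mul_comm]

theorem rbL_starG_le {k r : ℕ} [NeZero r] (n : ℕ) :
    (rbL (starG (k + 2)) n r : ℝ) ≤ n * r.descFactorial (k + 1) * ((n - 1) / r) ^ (k + 1) := by
  obtain ⟨c, hc⟩ := exists_rainbowCount_eq_rbL (r := r) (starG (k + 2)) n
  exact hc ▸ rainbowCount_starG_le c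

theorem sub_two_mul_div_le_div_sub_one {n r : ℕ} (hr : 0 < r) (hn : 2 * r ≤ n) :
    ((n : ℝ) - 2 * r) / r ≤ ((n / r - 1 : ℕ) : ℝ) := by
  have hdiv : 1 ≤ n / r := (Nat.le_div_iff_mul_le hr).2 (by omega)
  have hlt : (n : ℝ) < (n / r : ℕ) * r + r := by exact_mod_cast Nat.lt_div_mul_add hr
  rw [div_le_iff₀ (by exact_mod_cast hr), Nat.cast_sub hdiv, Nat.cast_one]
  linarith

theorem le_rbL_starG {k r n : ℕ} [NeZero r] (hn : 2 * r ≤ n) :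
    n * r.descFactorial (k + 1) * (((n : ℝ) - 2 * r) / r) ^ (k + 1) ≤
      rbL (starG (k + 2)) n r := by
  have hfloor := sub_two_mul_div_le_div_sub_one (Nat.pos_of_neZero r) hn
  have hnonneg : 0 ≤ ((n : ℝ) - 2 * r) / r :=
    div_nonneg (sub_nonneg.2 (by exact_mod_cast hn)) (Nat.cast_nonneg r)
  have hcount := (le_rainbowCount_starG_sumModColoring k n r).trans
    (rainbowCount_le_rbL (starG (k + 2)) (sumModColoring n r))
  calc n * r.descFactorial (k + 1) * (((n : ℝ) - 2 * r) / r) ^ (k + 1)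
      ≤ n * r.descFactorial (k + 1) * ((n / r - 1 : ℕ) : ℝ) ^ (k + 1) :=
        mul_le_mul_of_nonneg_left (pow_le_pow_left₀ hnonneg hfloor _) (by positivity)
    _ ≤ rbL (starG (k + 2)) n r := by exact_mod_cast hcount

theorem stmt7 (m r : ℕ) (hm : 2 ≤ m) (hr : m - 1 ≤ r) :
    Tendsto (fun n => rbC (starG m) n r) atTop
      (𝓝 ((r.choose (m - 1) * (m - 1).factorial : ℝ) / r ^ (m - 1))) := by
  obtain ⟨k, rfl⟩ : ∃ k, m = k + 2 := ⟨m - 2, by omega⟩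
  have : NeZero r := ⟨by omega⟩
  have hlim (a : ℝ) : Tendsto
      (fun n : ℕ => n * r.descFactorial (k + 1) * ((n - a) / r) ^ (k + 1) / n.descFactorial (k + 2))
      atTop (𝓝 ((r.descFactorial (k + 1) : ℝ) / r ^ (k + 1))) := by
    have h := (tendsto_mul_sub_pow_div_descFactorial a (k + 1)).const_mul
      ((r.descFactorial (k + 1) : ℝ) / r ^ (k + 1))
    rw [mul_one] at h
    exact h.congr fun n => by rw [div_pow]; ring
  rw [show k + 2 - 1 = k + 1 from rfl, ← Nat.cast_mul, mul_comm,
    ← Nat.descFactorial_eq_factorial_mul_choose]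
  simp_rw [rbC_eq_div_descFactorial]
  refine tendsto_of_tendsto_of_tendsto_of_le_of_le' (hlim (2 * r)) (hlim 1) ?_
    (Eventually.of_forall fun n => div_le_div_of_nonneg_right (rbL_starG_le n) (Nat.cast_nonneg _))
  filter_upwards [eventually_ge_atTop (2 * r)] with n hn
  exact div_le_div_of_nonneg_right (le_rbL_starG hn) (Nat.cast_nonneg _)
end

section
/- For every integer a ≥ 4, a!/(a^a − a) > C(a,2)! / C(a,2)^{C(a,2)}. -/
/-!
Since `(n + 1)! / (n + 1) ^ (n + 1) = n! / (n + 1) ^ n < n! / n ^ n`, the sequence `n! / n ^ n` is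
strictly decreasing for `n ≥ 1`. For `a ≥ 4` we have `a < C(a, 2)`, so
`C(a,2)! / C(a,2) ^ C(a,2) < a! / a ^ a < a! / (a ^ a - a)`.
-/

open Nat

lemma factorial_div_pow_self_succ_lt {n : ℕ} (hn : 0 < n) :
    ((n + 1)! : ℝ) / ((n + 1 : ℕ) : ℝ) ^ (n + 1) < (n ! : ℝ) / (n : ℝ) ^ n := by
  calc ((n + 1)! : ℝ) / ((n + 1 : ℕ) : ℝ) ^ (n + 1) = (n ! : ℝ) / ((n : ℝ) + 1) ^ n := by
        push_cast [Nat.factorial_succ]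
        field_simp
        ring
    _ < (n ! : ℝ) / (n : ℝ) ^ n := by gcongr; exact lt_add_one _

lemma strictAntiOn_factorial_div_pow_self :
    StrictAntiOn (fun n : ℕ ↦ (n ! : ℝ) / (n : ℝ) ^ n) (Set.Ici 1) :=
  fun _ hm _ _ hmn ↦ Nat.rel_of_forall_rel_succ_of_le_of_lt (· > ·)
    (f := fun n : ℕ ↦ (n ! : ℝ) / (n : ℝ) ^ n) (fun _ hk ↦ factorial_div_pow_self_succ_lt hk) hm hmn

lemma lt_choose_two {a : ℕ} (ha : 4 ≤ a) : a < a.choose 2 := by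
  obtain ⟨b, rfl⟩ : ∃ b, a = b + 1 := ⟨a - 1, by omega⟩
  have h3 : 3 ≤ b.choose 2 := Nat.choose_le_choose 2 (by omega : 3 ≤ b)
  rw [Nat.choose_succ_succ' b 1, Nat.choose_one_right]
  change b + 1 < b + b.choose 2
  omega

theorem stmt11 (a : ℕ) (ha : 4 ≤ a) :
    ((a.factorial : ℝ) / ((a : ℝ) ^ a - a))
      > ((a.choose 2).factorial : ℝ) / ((a.choose 2 : ℝ) ^ (a.choose 2)) := by
  have hchoose := lt_choose_two ha
  have ha1 : (1 : ℝ) < a := by exact_mod_cast (by omega : 1 < a)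
  have hpow : (a : ℝ) < (a : ℝ) ^ a := by
    simpa using pow_lt_pow_right₀ ha1 (by omega : 1 < a)
  calc ((a.choose 2)! : ℝ) / ((a.choose 2 : ℝ) ^ (a.choose 2))
      < (a ! : ℝ) / (a : ℝ) ^ a :=
        strictAntiOn_factorial_div_pow_self (Set.mem_Ici.2 (by omega))
          (Set.mem_Ici.2 (by omega)) hchoose
    _ < (a ! : ℝ) / ((a : ℝ) ^ a - a) := by
        gcongr
        linarith
end

section
/- Let m ≥ 2 and let c ∈ (0,1) be a constant with 2πm(1−c) > 1 and c + (1−c)·log(1−c) ≥ 2/(m−1) + 1/(12·C(m,2)²). Then √(2πm)/e^m > C(C(m,2), ⌈c·C(m,2)⌉)·(⌈c·C(m,2)⌉)! / C(m,2)^{⌈c·C(m,2)⌉}, where log is the natural logarithm. -/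
open Real Filter Stirling Nat

private lemma my_stirling_lower (n : ℕ) (hn : n ≠ 0) :
    Real.sqrt (2 * π * n) * (n / Real.exp 1) ^ n ≤ n ! := by
  obtain ⟨i, rfl⟩ := Nat.exists_eq_succ_of_ne_zero hn
  have h1 : Real.sqrt π ≤ stirlingSeq (i + 1) :=
    (stirlingSeq'_antitone).le_of_tendsto
      (tendsto_stirlingSeq_sqrt_pi.comp (tendsto_add_atTop_nat 1)) i
  have hd : (0:ℝ) < Real.sqrt (2 * ((i+1 : ℕ) : ℝ)) * (((i+1 : ℕ) : ℝ) / Real.exp 1) ^ (i+1) := by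
    positivity
  rw [stirlingSeq, le_div_iff₀ hd] at h1
  have : Real.sqrt (2 * π * ((i+1 : ℕ):ℝ))
      = Real.sqrt π * Real.sqrt (2 * ((i+1:ℕ):ℝ)) := by
    rw [← Real.sqrt_mul (by positivity)]; ring_nf
  show Real.sqrt (2 * π * ((i+1 : ℕ):ℝ)) * (((i+1:ℕ):ℝ) / Real.exp 1) ^ (i+1) ≤ ((i+1 : ℕ)! : ℝ)
  rw [this]
  nlinarith [h1]

private lemma my_diff_le (i : ℕ) : Real.log (stirlingSeq (i+1)) - Real.log (stirlingSeq (i+2))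
    ≤ 1/(12*((i:ℝ)+1)) - 1/(12*((i:ℝ)+2)) := by
  set q : ℝ := ((1 : ℝ) / (2 * ((i+1 : ℕ) : ℝ) + 1)) ^ 2 with hqdef
  have hx : (0:ℝ) ≤ (i:ℝ) := Nat.cast_nonneg i
  have hq0 : 0 ≤ q := sq_nonneg _
  have hqval : q = 1 / (2*(i:ℝ)+3)^2 := by rw [hqdef]; push_cast; rw [div_pow, one_pow]; ring_nf
  have hq1 : q < 1 := by
    rw [hqval, div_lt_one (by positivity)]; nlinarith
  have hgeo : HasSum (fun k : ℕ => (1/3 : ℝ) * q ^ (k+1)) (1/3 * (q / (1 - q))) := by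
    have h := (hasSum_geometric_of_lt_one hq0 hq1).mul_left (1/3 * q)
    have e1 : (fun k : ℕ => (1/3 : ℝ) * q ^ (k+1)) = (fun k : ℕ => (1/3 * q) * q ^ k) := by
      funext k; ring
    rw [e1, show (1/3 * (q/(1-q)) : ℝ) = 1/3 * q * (1-q)⁻¹ by ring]
    exact h
  have hle : Real.log (stirlingSeq (i+1)) - Real.log (stirlingSeq (i+2)) ≤ 1/3 * (q / (1 - q)) := by
    refine hasSum_le (fun k => ?_) (log_stirlingSeq_diff_hasSum i) hgeo
    have h3 : (3:ℝ) ≤ 2 * ((k+1:ℕ):ℝ) + 1 := by push_cast; nlinarith [Nat.cast_nonneg (α := ℝ) k]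
    have : (1:ℝ) / (2 * ((k+1:ℕ):ℝ) + 1) ≤ 1/3 := by
      apply div_le_div_of_nonneg_left (by norm_num) (by norm_num) h3 |>.trans_eq rfl
    calc (1:ℝ) / (2 * ((k+1:ℕ):ℝ) + 1) * q ^ (k+1) ≤ 1/3 * q ^ (k+1) := by
          apply mul_le_mul_of_nonneg_right this (pow_nonneg hq0 _)
      _ = _ := rfl
  refine hle.trans ?_
  rw [hqval]
  have h1 : (0:ℝ) < (2*(i:ℝ)+3)^2 := by positivity
  have h2 : (0:ℝ) < (2*(i:ℝ)+3)^2 - 1 := by nlinarith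
  have h3 : 1 - 1/(2*(i:ℝ)+3)^2 > 0 := by
    rw [gt_iff_lt, sub_pos, div_lt_one h1]; nlinarith
  apply le_of_eq
  field_simp
  ring

private lemma my_log_stirling_le (i : ℕ) :
    Real.log (stirlingSeq (i+1)) ≤ Real.log (Real.sqrt π) + 1/(12*((i:ℝ)+1)) := by
  set f : ℕ → ℝ := fun i => Real.log (stirlingSeq (i+1)) - 1/(12*((i:ℝ)+1)) with hf
  have hmono : Monotone f := by
    apply monotone_nat_of_le_succ
    intro n
    have h := my_diff_le n
    simp only [hf]
    have e2 : n + 1 + 1 = n + 2 := rfl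
    have e1 : (((n+1 : ℕ)):ℝ) + 1 = (n:ℝ) + 2 := by push_cast; ring
    rw [e2, e1]
    linarith
  have htend : Tendsto f atTop (nhds (Real.log (Real.sqrt π))) := by
    have h1 : Tendsto (fun i : ℕ => Real.log (stirlingSeq (i+1))) atTop
        (nhds (Real.log (Real.sqrt π))) :=
      ((Real.continuousAt_log (by positivity)).tendsto).comp
        (tendsto_stirlingSeq_sqrt_pi.comp (tendsto_add_atTop_nat 1))
    have h2 : Tendsto (fun i : ℕ => 1/(12*((i:ℝ)+1))) atTop (nhds 0) := by
      have h3 : (fun i : ℕ => 1/(12*((i:ℝ)+1))) = (fun i : ℕ => (1/12) * (1/((i:ℝ)+1))) := by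
        funext n
        have : ((n:ℝ)+1) ≠ 0 := by positivity
        field_simp
      rw [h3]
      simpa using tendsto_one_div_add_atTop_nhds_zero_nat.const_mul (1/12:ℝ)
    rw [show Real.log (Real.sqrt π) = Real.log (Real.sqrt π) - 0 by ring]
    exact h1.sub h2
  have := hmono.ge_of_tendsto htend i
  simp only [hf] at this
  linarith

private lemma my_stirling_upper (n : ℕ) (hn : n ≠ 0) :
    (n ! : ℝ) ≤ Real.sqrt (2 * π * n) * (n / Real.exp 1) ^ n * Real.exp (1/(12*(n:ℝ))) := by
  obtain ⟨i, rfl⟩ := Nat.exists_eq_succ_of_ne_zero hn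
  have hd : (0:ℝ) < Real.sqrt (2 * ((i+1 : ℕ) : ℝ)) * (((i+1 : ℕ) : ℝ) / Real.exp 1) ^ (i+1) := by
    positivity
  have hcast : ((i:ℝ)+1) = ((i+1 : ℕ):ℝ) := by push_cast; ring
  have hs : stirlingSeq (i+1) ≤ Real.sqrt π * Real.exp (1/(12*((i+1:ℕ):ℝ))) := by
    rw [← hcast]
    have h := my_log_stirling_le i
    have hspos := stirlingSeq'_pos i
    calc stirlingSeq (i+1) = Real.exp (Real.log (stirlingSeq (i+1))) := (Real.exp_log hspos).symm
      _ ≤ Real.exp (Real.log (Real.sqrt π) + 1/(12*((i:ℝ)+1))) := Real.exp_le_exp.mpr h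
      _ = _ := by rw [Real.exp_add, Real.exp_log (by positivity)]
  have hfact : ((i+1 : ℕ)! : ℝ) = stirlingSeq (i+1)
      * (Real.sqrt (2 * ((i+1 : ℕ) : ℝ)) * (((i+1 : ℕ) : ℝ) / Real.exp 1) ^ (i+1)) := by
    rw [stirlingSeq, div_mul_cancel₀ _ hd.ne']
  have hsqrt : Real.sqrt (2 * π * ((i+1 : ℕ):ℝ))
      = Real.sqrt π * Real.sqrt (2 * ((i+1:ℕ):ℝ)) := by
    rw [← Real.sqrt_mul (by positivity)]; ring_nf
  show ((i+1 : ℕ)! : ℝ) ≤ Real.sqrt (2 * π * ((i+1:ℕ):ℝ)) * (((i+1:ℕ):ℝ) / Real.exp 1) ^ (i+1)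
      * Real.exp (1/(12*((i+1:ℕ):ℝ)))
  rw [hfact, hsqrt]
  calc stirlingSeq (i+1) * (Real.sqrt (2 * ((i+1:ℕ):ℝ)) * (((i+1:ℕ):ℝ) / Real.exp 1) ^ (i+1))
      ≤ (Real.sqrt π * Real.exp (1/(12*((i+1:ℕ):ℝ))))
        * (Real.sqrt (2 * ((i+1:ℕ):ℝ)) * (((i+1:ℕ):ℝ) / Real.exp 1) ^ (i+1)) :=
        mul_le_mul_of_nonneg_right hs hd.le
    _ = _ := by ring

private lemma my_entropy_mono {n a b : ℝ} (hn : 0 < n) (ha : 0 ≤ a) (hab : a ≤ b) (hbn : b < n) :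
    a + (n - a) * Real.log ((n - a)/n) ≤ b + (n - b) * Real.log ((n - b)/n) := by
  have hv : 0 < n - b := by linarith
  have hu : 0 < n - a := by linarith
  have hun : n - a ≤ n := by linarith
  have hLuv : Real.log (n - a) - Real.log (n - b) ≤ (n - a)/(n - b) - 1 := by
    have h := Real.log_le_sub_one_of_pos (div_pos hu hv)
    rwa [Real.log_div hu.ne' hv.ne'] at h
  have h4 : (n - b) * (Real.log (n - a) - Real.log (n - b)) ≤ (n - a) - (n - b) := by
    have h := mul_le_mul_of_nonneg_left hLuv hv.le
    have h5 : (n - b) * ((n - a)/(n - b) - 1) = (n - a) - (n - b) := by field_simp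
    linarith
  have h6 : ((n - a) - (n - b)) * Real.log (n - a) ≤ ((n - a) - (n - b)) * Real.log n :=
    mul_le_mul_of_nonneg_left (Real.log_le_log hu hun) (by linarith)
  rw [Real.log_div hu.ne' hn.ne', Real.log_div hv.ne' hn.ne']
  nlinarith [h4, h6]

private lemma my_lt_of_log_lt {x y : ℝ} (hx : 0 < x) (hy : 0 < y)
    (h : Real.log x < Real.log y) : x < y := (Real.log_lt_log_iff hx hy).mp h

set_option maxHeartbeats 1000000 in
theorem stmt15 (m : ℕ) (hm : 2 ≤ m) (c : ℝ) (hc0 : 0 < c) (hc1 : c < 1)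
    (h2pi : 2 * Real.pi * m * (1 - c) > 1)
    (hineq : c + (1 - c) * Real.log (1 - c)
      ≥ 2 / ((m : ℝ) - 1) + 1 / (12 * ((m.choose 2 : ℝ)) ^ 2)) :
    Real.sqrt (2 * Real.pi * m) / Real.exp m
      > ((m.choose 2).choose ⌈c * (m.choose 2 : ℝ)⌉₊ : ℝ) *
          ((⌈c * (m.choose 2 : ℝ)⌉₊).factorial : ℝ) /
          ((m.choose 2 : ℝ) ^ ⌈c * (m.choose 2 : ℝ)⌉₊) := by
  have hπ := Real.pi_pos
  have hπ6 : 3.141592 < π := Real.pi_gt_d6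
  set N := m.choose 2 with hNdef
  set k := ⌈c * (N:ℝ)⌉₊ with hkdef
  have hNcast : ((N:ℕ):ℝ) = (m:ℝ) * ((m:ℝ)-1)/2 := Nat.cast_choose_two ℝ m
  have hm2 : (2:ℝ) ≤ m := by exact_mod_cast hm
  have hmr : (0:ℝ) < m := by linarith only [hm2]
  have hc1' : (0:ℝ) < 1 - c := by linarith only [hc1]
  have hNpos : 0 < N := Nat.choose_pos hm
  have hNr : (0:ℝ) < N := by exact_mod_cast hNpos
  have hlogneg : (1-c) * Real.log (1 - c) < 0 :=
    mul_neg_of_pos_of_neg hc1' (Real.log_neg (by linarith only [hc1]) (by linarith only [hc0]))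
  have h12N : (0:ℝ) < 1 / (12 * ((N:ℝ))^2) := by positivity
  have hm4 : 4 ≤ m := by
    by_contra h
    push_neg at h
    have h3 : (m:ℝ) ≤ 3 := by exact_mod_cast Nat.lt_succ_iff.mp h
    have h4 : (1:ℝ) ≤ 2/((m:ℝ)-1) := by
      rw [le_div_iff₀ (by linarith only [hm2])]; linarith only [h3]
    linarith only [hineq, hlogneg, h12N, h4, hc1]
  have hm4' : (4:ℝ) ≤ m := by exact_mod_cast hm4
  have h2N : 2 * (N:ℝ) = m * ((m:ℝ)-1) := by rw [hNcast]; ring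
  have hN6 : (6:ℝ) ≤ (N:ℝ) := by nlinarith only [h2N, hm4']
  have hcN0 : 0 < c * (N:ℝ) := by positivity
  have hkN : k ≤ N := by
    apply Nat.ceil_le.mpr
    have h := mul_le_mul_of_nonneg_right hc1.le hNr.le
    linarith only [h]
  have hk1 : 0 < k := Nat.ceil_pos.mpr hcN0
  have hck : c * (N:ℝ) ≤ (k:ℝ) := Nat.le_ceil _
  have hklt : (k:ℝ) < c * (N:ℝ) + 1 := Nat.ceil_lt_add_one hcN0.le
  have hTpos : (0:ℝ) < Real.sqrt (2*π*(m:ℝ)) / Real.exp (m:ℝ) := by positivity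
  have hlogT : Real.log (Real.sqrt (2*π*(m:ℝ)) / Real.exp (m:ℝ))
      = Real.log (2*π*(m:ℝ))/2 - m := by
    rw [Real.log_div (by positivity) (Real.exp_ne_zero _), Real.log_sqrt (by positivity),
      Real.log_exp]
  have hfacteq : ((N.choose k : ℕ):ℝ) * ((k)! : ℝ) * (((N - k))! : ℝ) = ((N)! : ℝ) := by
    exact_mod_cast congrArg (Nat.cast (R := ℝ)) (Nat.choose_mul_factorial_mul_factorial hkN)
  have hrw : ((N.choose k : ℕ):ℝ) * ((k)! : ℝ) / ((N:ℝ)^k)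
      = ((N)! : ℝ) / ((((N-k))! : ℝ) * (N:ℝ)^k) := by
    rw [div_eq_div_iff (by positivity) (by positivity)]
    linear_combination ((N:ℝ)^k) * hfacteq
  rw [gt_iff_lt, hrw]
  by_cases hkcase : k = N
  · -- Case k = N
    have hXpos : (0:ℝ) < Real.sqrt (2*π*(N:ℝ)) * Real.exp (1/(12*(N:ℝ))) / Real.exp (N:ℝ) := by
      have := Real.sqrt_pos.mpr (mul_pos (by positivity : (0:ℝ) < 2*π) hNr)
      positivity
    have step1 : ((N)! : ℝ) / ((((N-k))! : ℝ) * (N:ℝ)^k)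
        ≤ Real.sqrt (2*π*(N:ℝ)) * Real.exp (1/(12*(N:ℝ))) / Real.exp (N:ℝ) := by
      rw [hkcase, Nat.sub_self, Nat.factorial_zero, Nat.cast_one, one_mul]
      have hup := my_stirling_upper N hNpos.ne'
      have hNe : ((N:ℝ)/Real.exp 1)^N = (N:ℝ)^N / Real.exp (N:ℝ) := by
        rw [div_pow, Real.exp_one_pow]
      rw [hNe] at hup
      have hup2 : ((N)! : ℝ) * Real.exp (N:ℝ)
          ≤ Real.sqrt (2*π*(N:ℝ)) * Real.exp (1/(12*(N:ℝ))) * (N:ℝ)^N := by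
        have h := mul_le_mul_of_nonneg_right hup (Real.exp_pos (N:ℝ)).le
        have e : Real.sqrt (2*π*(N:ℝ)) * ((N:ℝ)^N / Real.exp (N:ℝ)) * Real.exp (1/(12*(N:ℝ)))
            * Real.exp (N:ℝ) = Real.sqrt (2*π*(N:ℝ)) * Real.exp (1/(12*(N:ℝ))) * (N:ℝ)^N := by
          field_simp
        rw [e] at h
        exact h
      rw [div_le_div_iff₀ (by positivity) (Real.exp_pos _)]
      linarith only [hup2]
    have step2 : Real.log (Real.sqrt (2*π*(N:ℝ)) * Real.exp (1/(12*(N:ℝ))) / Real.exp (N:ℝ))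
        < Real.log (Real.sqrt (2*π*(m:ℝ)) / Real.exp (m:ℝ)) := by
      have p1 : (0:ℝ) < Real.sqrt (2*π*(N:ℝ)) :=
        Real.sqrt_pos.mpr (mul_pos (by positivity : (0:ℝ) < 2*π) hNr)
      rw [hlogT, Real.log_div (by positivity) (Real.exp_ne_zero _),
        Real.log_mul p1.ne' (Real.exp_ne_zero _), Real.log_sqrt (by positivity),
        Real.log_exp, Real.log_exp]
      have e1 : Real.log (2*π*(N:ℝ)) = Real.log (2*π) + Real.log (N:ℝ) :=
        Real.log_mul (by positivity) hNr.ne'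
      have e2 : Real.log (2*π*(m:ℝ)) = Real.log (2*π) + Real.log (m:ℝ) :=
        Real.log_mul (by positivity) hmr.ne'
      have hlr : Real.log (N:ℝ) - Real.log (m:ℝ) ≤ (N:ℝ)/(m:ℝ) - 1 := by
        have h := Real.log_le_sub_one_of_pos (show (0:ℝ) < (N:ℝ)/(m:ℝ) by positivity)
        rwa [Real.log_div hNr.ne' hmr.ne'] at h
      have hNm : (N:ℝ)/(m:ℝ) = ((m:ℝ)-1)/2 := by
        rw [div_eq_div_iff hmr.ne' (by norm_num : (2:ℝ) ≠ 0)]; linarith only [h2N]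
      have h12 : 1/(12*(N:ℝ)) ≤ 1/72 := by
        rw [div_le_div_iff₀ (by positivity) (by norm_num)]; linarith only [hN6]
      have key : Real.log (N:ℝ) - Real.log (m:ℝ) ≤ ((m:ℝ)-3)/2 := by
        linarith only [hlr, hNm]
      have key4 : ((m:ℝ)-3)/4 + 1/72 < (N:ℝ) - m := by
        nlinarith only [hm4', h2N, mul_nonneg (sub_nonneg.mpr hm4') (by linarith only [hm4'] : (0:ℝ) ≤ (m:ℝ)-3)]
      rw [e1, e2]
      linarith only [key, key4, h12]
    exact lt_of_le_of_lt step1 (my_lt_of_log_lt hXpos hTpos step2)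
  · -- Case k < N
    have hkNlt : k < N := lt_of_le_of_ne hkN hkcase
    have hkr : (k:ℝ) < (N:ℝ) := by exact_mod_cast hkNlt
    have hjne : N - k ≠ 0 := by omega
    have hjcast : (((N - k:ℕ)):ℝ) = (N:ℝ) - (k:ℝ) := by
      rw [Nat.cast_sub hkN]
    have hjpos : (0:ℝ) < (N:ℝ) - (k:ℝ) := by linarith only [hkr]
    have hj1 : (1:ℝ) ≤ (N:ℝ) - (k:ℝ) := by
      have h : (k+1 : ℕ) ≤ N := hkNlt
      have h2 := (Nat.cast_le (α := ℝ)).mpr h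
      push_cast at h2
      linarith only [h2]
    have hjj : (0:ℝ) < ((N-k:ℕ):ℝ) := by rw [hjcast]; exact hjpos
    have p1 : (0:ℝ) < Real.sqrt (2*π*(N:ℝ)) :=
      Real.sqrt_pos.mpr (mul_pos (by positivity : (0:ℝ) < 2*π) hNr)
    have p2 : (0:ℝ) < ((N:ℝ)/Real.exp 1)^N := pow_pos (div_pos hNr (Real.exp_pos 1)) N
    have p3 : (0:ℝ) < Real.sqrt (2*π*((N-k:ℕ):ℝ)) :=
      Real.sqrt_pos.mpr (mul_pos (by positivity : (0:ℝ) < 2*π) hjj)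
    have p4 : (0:ℝ) < (((N-k:ℕ):ℝ)/Real.exp 1)^(N-k) :=
      pow_pos (div_pos hjj (Real.exp_pos 1)) _
    have p5 : (0:ℝ) < (N:ℝ)^k := pow_pos hNr k
    have hnumpos : (0:ℝ) < Real.sqrt (2*π*(N:ℝ)) * ((N:ℝ)/Real.exp 1)^N
        * Real.exp (1/(12*(N:ℝ))) := mul_pos (mul_pos p1 p2) (Real.exp_pos _)
    have hdenpos : (0:ℝ) < Real.sqrt (2*π*((N-k:ℕ):ℝ)) * (((N-k:ℕ):ℝ)/Real.exp 1)^(N-k)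
        * (N:ℝ)^k := mul_pos (mul_pos p3 p4) p5
    set X := Real.sqrt (2*π*(N:ℝ)) * ((N:ℝ)/Real.exp 1)^N * Real.exp (1/(12*(N:ℝ)))
      / (Real.sqrt (2*π*((N-k:ℕ):ℝ)) * (((N-k:ℕ):ℝ)/Real.exp 1)^(N-k) * (N:ℝ)^k) with hX
    have hXpos : 0 < X := div_pos hnumpos hdenpos
    have step1 : ((N)! : ℝ) / ((((N-k))! : ℝ) * (N:ℝ)^k) ≤ X := by
      rw [hX]
      exact div_le_div₀ (by positivity) (my_stirling_upper N hNpos.ne') hdenpos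
        (mul_le_mul_of_nonneg_right (my_stirling_lower (N-k) hjne) p5.le)
    have hlogX : Real.log X
        = Real.log (2*π*(N:ℝ))/2 + (N:ℝ)*(Real.log (N:ℝ) - 1) + 1/(12*(N:ℝ))
          - (Real.log (2*π*((N-k:ℕ):ℝ))/2 + ((N-k:ℕ):ℝ)*(Real.log ((N-k:ℕ):ℝ) - 1)
             + (k:ℝ)*Real.log (N:ℝ)) := by
      rw [hX, Real.log_div hnumpos.ne' hdenpos.ne',
        Real.log_mul (mul_pos p1 p2).ne' (Real.exp_ne_zero _),
        Real.log_mul p1.ne' p2.ne',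
        Real.log_mul (mul_pos p3 p4).ne' p5.ne',
        Real.log_mul p3.ne' p4.ne',
        Real.log_sqrt (by positivity), Real.log_sqrt (mul_pos (by positivity) hjj).le,
        Real.log_pow, Real.log_pow, Real.log_pow,
        Real.log_div hNr.ne' (Real.exp_ne_zero 1), Real.log_div hjj.ne' (Real.exp_ne_zero 1),
        Real.log_exp, Real.log_exp]
    rw [hjcast] at hlogX
    have hP1 : (m:ℝ) + 1/(12*(N:ℝ))
        ≤ (k:ℝ) + ((N:ℝ)-(k:ℝ)) * (Real.log ((N:ℝ)-(k:ℝ)) - Real.log (N:ℝ)) := by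
      have hmono := my_entropy_mono (n := (N:ℝ)) (a := c*(N:ℝ)) (b := (k:ℝ))
        hNr (le_of_lt hcN0) hck hkr
      have e3 : ((N:ℝ) - c*(N:ℝ))/(N:ℝ) = 1 - c := by
        field_simp
      have e4 : (N:ℝ) - c*(N:ℝ) = (1-c)*(N:ℝ) := by ring
      rw [e3, e4, Real.log_div hjpos.ne' hNr.ne'] at hmono
      have hmul := mul_le_mul_of_nonneg_left hineq hNr.le
      have e5a : (N:ℝ) * (2/((m:ℝ)-1)) = m := by
        have hm1 : ((m:ℝ)-1) ≠ 0 := by linarith only [hm2]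
        field_simp
        linarith only [h2N]
      have e5b : (N:ℝ) * (1/(12*(N:ℝ)^2)) = 1/(12*(N:ℝ)) := by
        field_simp
      linarith only [hmono, hmul, e5a, e5b]
    have step2 : Real.log X < Real.log (Real.sqrt (2*π*(m:ℝ)) / Real.exp (m:ℝ)) := by
      rw [hlogX, hlogT]
      have ea : Real.log (2*π*(N:ℝ)) = Real.log (2*π) + Real.log (N:ℝ) :=
        Real.log_mul (by positivity) hNr.ne'
      have eb : Real.log (2*π*((N:ℝ)-(k:ℝ))) = Real.log (2*π) + Real.log ((N:ℝ)-(k:ℝ)) :=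
        Real.log_mul (by positivity) hjpos.ne'
      have ec : Real.log (2*π*(m:ℝ)) = Real.log (2*π) + Real.log (m:ℝ) :=
        Real.log_mul (by positivity) hmr.ne'
      rw [ea, eb, ec]
      by_cases hcase2 : (N:ℝ) < 2*π*(m:ℝ)*((N:ℝ)-(k:ℝ))
      · have hLL : Real.log (N:ℝ) - Real.log ((N:ℝ)-(k:ℝ))
            < Real.log (2*π) + Real.log (m:ℝ) := by
          have h := Real.log_lt_log hNr hcase2
          rw [Real.log_mul (mul_pos (by positivity : (0:ℝ) < 2*π) hmr).ne' hjpos.ne',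
            Real.log_mul (by positivity) hmr.ne'] at h
          linarith only [h]
        linarith only [hP1, hLL]
      · push_neg at hcase2
        have h2πm : (0:ℝ) < 2*π*(m:ℝ) := mul_pos (by positivity) hmr
        have hjn : (N:ℝ) - (k:ℝ) ≤ (N:ℝ)/(2*π*(m:ℝ)) := by
          rw [le_div_iff₀ h2πm]
          linarith only [hcase2]
        have hπm : 3.141592*(m:ℝ) ≤ π*(m:ℝ) := mul_le_mul_of_nonneg_right hπ6.le hmr.le
        have hstep : 2*π*(m:ℝ) ≤ (N:ℝ) := by
          have h := mul_le_mul_of_nonneg_left hj1 h2πm.le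
          linarith only [hcase2, h]
        have h13 : (13:ℝ) < m := by
          nlinarith only [hstep, hπm, h2N, hmr]
        have hm14 : (14:ℝ) ≤ m := by
          have hnat : 13 < m := by exact_mod_cast h13
          have h14 : (14:ℕ) ≤ m := hnat
          exact_mod_cast h14
        have hn91 : (91:ℝ) ≤ (N:ℝ) := by nlinarith only [hm14, h2N]
        have hsqN : Real.sqrt (N:ℝ) ≤ (m:ℝ) := by
          have h1 : (N:ℝ) ≤ (m:ℝ)^2 := by nlinarith only [h2N, hmr, sq_nonneg ((m:ℝ))]
          calc Real.sqrt (N:ℝ) ≤ Real.sqrt ((m:ℝ)^2) := Real.sqrt_le_sqrt h1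
            _ = m := Real.sqrt_sq hmr.le
        have hLnle : Real.log (N:ℝ) ≤ 2*(m:ℝ) - 2 := by
          have h1 := Real.log_le_sub_one_of_pos (Real.sqrt_pos.mpr hNr)
          rw [Real.log_sqrt hNr.le] at h1
          linarith only [h1, hsqN]
        have hLj0 : 0 ≤ Real.log ((N:ℝ)-(k:ℝ)) := Real.log_nonneg hj1
        have hLm0 : 0 ≤ Real.log (m:ℝ) := Real.log_nonneg (by linarith only [hm2])
        have hjLn : ((N:ℝ)-(k:ℝ))*Real.log (N:ℝ) ≤ (N:ℝ)/π := by
          have h1 : ((N:ℝ)-(k:ℝ))*Real.log (N:ℝ) ≤ ((N:ℝ)-(k:ℝ))*(2*(m:ℝ)) :=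
            mul_le_mul_of_nonneg_left (by linarith only [hLnle]) hjpos.le
          have h2 : ((N:ℝ)-(k:ℝ))*(2*(m:ℝ)) ≤ ((N:ℝ)/(2*π*(m:ℝ)))*(2*(m:ℝ)) :=
            mul_le_mul_of_nonneg_right hjn (by positivity)
          have h3 : ((N:ℝ)/(2*π*(m:ℝ)))*(2*(m:ℝ)) = (N:ℝ)/π := by
            field_simp
          linarith only [h1, h2, h3]
        have hNpi : (N:ℝ)/π ≤ (8/25)*(N:ℝ) := by
          have h1 : (N:ℝ)/π ≤ (N:ℝ)/(25/8:ℝ) :=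
            div_le_div_of_nonneg_left hNr.le (by norm_num) (by linarith only [hπ6])
          have h2 : (N:ℝ)/(25/8:ℝ) = (8/25)*(N:ℝ) := by ring
          linarith only [h1, h2]
        have hj87 : (N:ℝ)-(k:ℝ) ≤ (N:ℝ)/87 := by
          refine hjn.trans (div_le_div_of_nonneg_left hNr.le (by norm_num) ?_)
          linarith only [hπm, hm14]
        have hmle : (m:ℝ) ≤ 2*(N:ℝ)/13 := by nlinarith only [hm14, h2N]
        have h1092 : 1/(12*(N:ℝ)) ≤ 1/1092 := by
          rw [div_le_div_iff₀ (by positivity) (by norm_num)]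
          linarith only [hn91]
        have hjLj : 0 ≤ ((N:ℝ)-(k:ℝ))*Real.log ((N:ℝ)-(k:ℝ)) := mul_nonneg hjpos.le hLj0
        have hLa0 : 0 ≤ Real.log (2*π) := Real.log_nonneg (by linarith only [hπ6])
        linarith only [hLnle, hLj0, hjLn, hNpi, hjLj, hj87, hmle, h1092, hLm0, hLa0, hn91]
    exact lt_of_le_of_lt step1 (my_lt_of_log_lt hXpos hTpos step2)
end
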